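/- arXiv:1509.00609 — 4 statements merged into one kernel-verified Lean document; each statement's English description precedes it below -/
import Mathlib

section
/- For all vectors u1, u2, u3 in R^m it holds that 4·((3/2)u3 - 2u2 + (1/2)u1, u3) = |u3|^2 - |u2|^2 + |2u3 - u2|^2 - |2u2 - u1|^2 + |u3 - 2u2 + u1|^2. -/
theorem four_mul_inner_bdf2_eq_norm_sq {E : Type*} [NormedAddCommGroup E] [InnerProductSpace ℝ E]
    (u1 u2 u3 : E) :
    4 * inner ℝ ((3 / 2 : ℝ) • u3 - (2 : ℝ) • u2 + (1 / 2 : ℝ) • u1) u3 =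
      ‖u3‖ ^ 2 - ‖u2‖ ^ 2 + ‖(2 : ℝ) • u3 - u2‖ ^ 2 - ‖(2 : ℝ) • u2 - u1‖ ^ 2
        + ‖u3 - (2 : ℝ) • u2 + u1‖ ^ 2 := by
  simp only [← real_inner_self_eq_norm_sq, inner_sub_left, inner_sub_right, inner_add_left,
    inner_add_right, real_inner_smul_left, real_inner_smul_right, real_inner_comm u2 u3,
    real_inner_comm u1 u2, real_inner_comm u1 u3]
  ring

theorem emmrich_identity_two_step_general (m : ℕ)
    (u1 u2 u3 : EuclideanSpace ℝ (Fin m)) :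
    4 * (inner ℝ ((3 / 2 : ℝ) • u3 - (2 : ℝ) • u2 + (1 / 2 : ℝ) • u1) u3 : ℝ) =
      ‖u3‖ ^ 2 - ‖u2‖ ^ 2 + ‖(2 : ℝ) • u3 - u2‖ ^ 2 - ‖(2 : ℝ) • u2 - u1‖ ^ 2
        + ‖u3 - (2 : ℝ) • u2 + u1‖ ^ 2 :=
  four_mul_inner_bdf2_eq_norm_sq u1 u2 u3

theorem emmrich_identity_two_step (m : ℕ) (hm : 0 < m)
    (u1 u2 u3 : EuclideanSpace ℝ (Fin m)) :
    4 * (inner ℝ ((3 / 2 : ℝ) • u3 - (2 : ℝ) • u2 + (1 / 2 : ℝ) • u1) u3 : ℝ) =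
      ‖u3‖ ^ 2 - ‖u2‖ ^ 2 + ‖(2 : ℝ) • u3 - u2‖ ^ 2 - ‖(2 : ℝ) • u2 - u1‖ ^ 2
        + ‖u3 - (2 : ℝ) • u2 + u1‖ ^ 2 :=
  emmrich_identity_two_step_general m u1 u2 u3
end

section
/- Consider the 3/2-volatility model drift f(x) = x - λx|x| and diffusion g(x) = σ|x|^{3/2} on R. If λ > 0, σ ∈ R, and η > 0 satisfy 2σ²η ≤ λ, then for all x1, x2 ∈ R it holds that (f(x1) - f(x2))(x1 - x2) + η|g(x1) - g(x2)|² ≤ |x1 - x2|², i.e., the global monotonicity condition holds with constant L = 1. -/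
private lemma sqrt_decomp (x : ℝ) :
    ∃ u : ℝ, 0 ≤ u ∧ u ^ 2 = |x| ∧ |x| ^ ((3 : ℝ) / 2) = u ^ 3 := by
  refine ⟨Real.sqrt |x|, Real.sqrt_nonneg _, Real.sq_sqrt (abs_nonneg _), ?_⟩
  rw [Real.sqrt_eq_rpow, ← Real.rpow_natCast (|x| ^ ((1 : ℝ) / 2)) 3,
    ← Real.rpow_mul (abs_nonneg _)]
  norm_num

private lemma key_ineq (u v : ℝ) (hu : 0 ≤ u) (hv : 0 ≤ v) :
    (u ^ 3 - v ^ 3) ^ 2 ≤ 2 * (u ^ 2 - v ^ 2) ^ 2 * (u ^ 2 + v ^ 2) := by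
  nlinarith [sq_nonneg (u - v), sq_nonneg (u + v), sq_nonneg (u * v), sq_nonneg (u ^ 2 - v ^ 2),
    mul_nonneg hu hv, sq_nonneg (u ^ 2 + v ^ 2 - 3 * u * v), sq_nonneg ((u - v) * (u + v)),
    mul_nonneg (mul_nonneg hu hv) (sq_nonneg (u - v)),
    mul_nonneg (mul_nonneg (mul_nonneg hu hv) (mul_nonneg hu hv)) (sq_nonneg (u - v))]

private lemma key_ineq2 (u v : ℝ) :
    (u ^ 3 - v ^ 3) ^ 2 ≤ 2 * (u ^ 4 + v ^ 4) * (u ^ 2 + v ^ 2) := by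
  nlinarith [sq_nonneg (u ^ 3 + v ^ 3), sq_nonneg (u ^ 3 - v ^ 3), sq_nonneg (u ^ 2 * v),
    sq_nonneg (u * v ^ 2)]

theorem three_half_volatility_monotonicity
    (lam σ η : ℝ) (hlam : 0 < lam) (hη : 0 < η) (hcond : 2 * σ ^ 2 * η ≤ lam) :
    ∀ x1 x2 : ℝ,
      (((x1 - lam * x1 * |x1|) - (x2 - lam * x2 * |x2|)) * (x1 - x2))
        + η * |σ * |x1| ^ ((3 : ℝ) / 2) - σ * |x2| ^ ((3 : ℝ) / 2)| ^ 2
        ≤ |x1 - x2| ^ 2 := by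
  intro x1 x2
  obtain ⟨u, hu0, hu2, hu3⟩ := sqrt_decomp x1
  obtain ⟨v, hv0, hv2, hv3⟩ := sqrt_decomp x2
  rw [hu3, hv3, sq_abs, sq_abs, ← hu2, ← hv2]
  have hησ : 0 ≤ η * σ ^ 2 := mul_nonneg hη.le (sq_nonneg σ)
  have h3 : η * σ ^ 2 * (u ^ 3 - v ^ 3) ^ 2
      ≤ lam * ((u ^ 2 - v ^ 2) ^ 2 * (u ^ 2 + v ^ 2)) := by
    have h1 := mul_le_mul_of_nonneg_left (key_ineq u v hu0 hv0) hησ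
    have hplus : (0 : ℝ) ≤ (u ^ 2 - v ^ 2) ^ 2 * (u ^ 2 + v ^ 2) := by positivity
    have h2 := mul_le_mul_of_nonneg_right hcond hplus
    nlinarith [h1, h2]
  have h3m : η * σ ^ 2 * (u ^ 3 - v ^ 3) ^ 2
      ≤ lam * ((u ^ 4 + v ^ 4) * (u ^ 2 + v ^ 2)) := by
    have h1 := mul_le_mul_of_nonneg_left (key_ineq2 u v) hησ
    have hplus : (0 : ℝ) ≤ (u ^ 4 + v ^ 4) * (u ^ 2 + v ^ 2) := by positivity
    have h2 := mul_le_mul_of_nonneg_right hcond hplus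
    nlinarith [h1, h2]
  rcases abs_cases x1 with ⟨e1, _⟩ | ⟨e1, _⟩ <;> rcases abs_cases x2 with ⟨e2, _⟩ | ⟨e2, _⟩
  · have hx1 : x1 = u ^ 2 := by rw [← e1, ← hu2]
    have hx2 : x2 = v ^ 2 := by rw [← e2, ← hv2]
    subst hx1 hx2
    nlinarith [h3]
  · have hx1 : x1 = u ^ 2 := by rw [← e1, ← hu2]
    have hx2 : x2 = -v ^ 2 := by rw [hv2, e2]; ring
    subst hx1 hx2
    nlinarith [h3m]
  · have hx1 : x1 = -u ^ 2 := by rw [hu2, e1]; ring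
    have hx2 : x2 = v ^ 2 := by rw [← e2, ← hv2]
    subst hx1 hx2
    nlinarith [h3m]
  · have hx1 : x1 = -u ^ 2 := by rw [hu2, e1]; ring
    have hx2 : x2 = -v ^ 2 := by rw [hv2, e2]; ring
    subst hx1 hx2
    nlinarith [h3]
end

section
/- Let f : R² → R² be defined componentwise by f(x)_i = x_i - x_i³ for i = 1,2, let g : R² → R^{2×2} be the diagonal matrix with entries g(x)_{ii} = σx_i², and let A be the symmetric positive semidefinite 2×2 matrix with entries A_{11} = A_{22} = (1+λ)/2, A_{12} = A_{21} = (1-λ)/2, λ ≥ 0. If σ > 0 and η = 1/(2σ²), then for all x, y ∈ R² it holds that (-A(x-y) + f(x) - f(y), x - y) + η|g(x) - g(y)|_HS² ≤ |x - y|², i.e., the global monotonicity condition holds with L = 1. -/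
open Matrix

theorem toy_spde_monotonicity (lam σ : ℝ) (hlam : 0 ≤ lam) (hσ : 0 < σ)
    (η : ℝ) (hη : η = 1 / (2 * σ ^ 2))
    (A : Matrix (Fin 2) (Fin 2) ℝ)
    (hA : A = !![(1 + lam) / 2, (1 - lam) / 2; (1 - lam) / 2, (1 + lam) / 2])
    (f : (Fin 2 → ℝ) → (Fin 2 → ℝ)) (hf : ∀ x i, f x i = x i - (x i) ^ 3)
    (g : (Fin 2 → ℝ) → Matrix (Fin 2) (Fin 2) ℝ)
    (hg : ∀ x, g x = Matrix.diagonal (fun i => σ * (x i) ^ 2)) :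
    ∀ x y : Fin 2 → ℝ,
      (∑ i, (-(A *ᵥ (x - y)) i + (f x i - f y i)) * (x i - y i))
        + η * (∑ i, ∑ j, (g x i j - g y i j) ^ 2)
        ≤ ∑ i, (x i - y i) ^ 2 := by
  intro x y
  subst hA hη
  simp only [hf, hg, Fin.sum_univ_two, Matrix.mulVec, Matrix.diagonal,
    Matrix.cons_val', Matrix.cons_val_zero, Matrix.cons_val_one, Matrix.head_cons,
    Matrix.head_fin_const, Matrix.empty_val', Matrix.cons_val_fin_one,
    Matrix.of_apply, Pi.sub_apply, dotProduct, Fin.isValue]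
  have hσ2 : σ ^ 2 > 0 := by positivity
  have key : (σ ^ 2 : ℝ)⁻¹ * (1 / 2) * (σ * x 0 ^ 2 - σ * y 0 ^ 2) ^ 2
      = (x 0 ^ 2 - y 0 ^ 2) ^ 2 / 2 := by field_simp
  have key1 : (σ ^ 2 : ℝ)⁻¹ * (1 / 2) * (σ * x 1 ^ 2 - σ * y 1 ^ 2) ^ 2
      = (x 1 ^ 2 - y 1 ^ 2) ^ 2 / 2 := by field_simp
  simp only [show ((0:Fin 2) = 1) = False by simp, show ((1:Fin 2) = 0) = False by simp, if_false, sub_zero, if_true]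
  norm_num [mul_add]
  nlinarith [sq_nonneg (x 0 - y 0 + (x 1 - y 1)), sq_nonneg (x 0 - y 0 - (x 1 - y 1)),
    sq_nonneg ((x 0 - y 0) * (x 0 + y 0)), sq_nonneg ((x 1 - y 1) * (x 1 + y 1)),
    sq_nonneg ((x 0 - y 0) ^ 2), sq_nonneg ((x 1 - y 1) ^ 2),
    mul_nonneg hlam (sq_nonneg (x 0 - y 0 - (x 1 - y 1))),
    sq_nonneg (x 0 - y 0), sq_nonneg (x 1 - y 1), key, key1]
end

section
/- Let U = (U^0, ..., U^N) be real-valued (R^m-valued) square-integrable random variables satisfying the backward Euler recursion U^j = U^{j-1} + h f(U^j) + g(U^{j-1})ΔW^j with f, g satisfying the coercivity condition (f(x),x) + ((4q-3)/2)|g(x)|_HS² ≤ L(1+|x|²) for some q ≥ 1, and assume h ∈ (0, 1/(2L)) and that ΔW^j is independent of F_{t_{j-1}} with E[ΔW^j] = 0 and E[|ΔW^j|²] = h per coordinate. Then for all n ∈ {1,...,N}: E[|U^n|²] + h·E[|g(U^n)|_HS²] ≤ C_h·exp(2L·nh/(1-2Lh))·(1 + E[|U^0|²] + h·E[|g(U^0)|_HS²]),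 where C_h = max{1, 2LT}/(1-2Lh) and T ≥ Nh. -/
open MeasureTheory ProbabilityTheory Matrix

/-!
Put `V = U^{j-1} + g(U^{j-1}) ΔW^j`, so that the implicit step reads `U^j - h f(U^j) = V`.
Then `|U^j|² ≤ |V|² + 2h (f(U^j), U^j)`, and coercivity with `4q - 3 ≥ 1` gives
`|U^j|² + h |g(U^j)|² ≤ |V|² + 2Lh (1 + |U^j|²)`. As `ΔW^j` is independent of `F_{t_{j-1}}`,
centred and uncorrelated with variance `h`, the cross terms of `E|V|²` vanish and
`E|V|² = E|U^{j-1}|² + h E|g(U^{j-1})|²`. So `a_j = E|U^j|² + h E|g(U^j)|²` obeys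
`(1 - 2Lh) a_j ≤ a_{j-1} + 2Lh`, and a discrete Gronwall argument together with
`(1 - 2Lh)^{-n} ≤ exp (2Lnh / (1 - 2Lh))` yields the bound.
-/

section Elementary

variable {ι κ : Type*} [Fintype ι] [Fintype κ]

theorem sum_sq_le_sum_sq_add_two_mul_sum_sub_mul (u v : ι → ℝ) :
    ∑ i, u i ^ 2 ≤ ∑ i, v i ^ 2 + 2 * ∑ i, (u i - v i) * u i := by
  rw [Finset.mul_sum, ← Finset.sum_add_distrib]
  exact Finset.sum_le_sum fun i _ => by nlinarith [sq_nonneg (u i - v i)]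

theorem add_sum_mul_sq (a : ℝ) (c w : κ → ℝ) :
    (a + ∑ k, c k * w k) ^ 2
      = a ^ 2 + 2 * ∑ k, a * c k * w k + ∑ k, ∑ l, c k * c l * (w k * w l) := by
  have hcross : a * ∑ k, c k * w k = ∑ k, a * c k * w k := by
    rw [Finset.mul_sum]; simp only [mul_assoc]
  have hquad : (∑ k, c k * w k) ^ 2 = ∑ k, ∑ l, c k * c l * (w k * w l) := by
    rw [sq, Finset.sum_mul_sum]; simp only [mul_mul_mul_comm]
  rw [add_sq, mul_assoc 2, hcross, hquad]

theorem sum_sq_add_mul_le_of_coercive {f : (ι → ℝ) → ι → ℝ} {L q h G : ℝ} {u v : ι → ℝ}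
    (hq : 1 ≤ q) (hh : 0 ≤ h) (hG : 0 ≤ G)
    (hcoer : ∑ i, f u i * u i + (4 * q - 3) / 2 * G ≤ L * (1 + ∑ i, u i ^ 2))
    (huv : u = v + h • f u) :
    ∑ i, u i ^ 2 + h * G ≤ ∑ i, v i ^ 2 + 2 * L * h * (1 + ∑ i, u i ^ 2) := by
  have hsub : ∑ i, (u i - v i) * u i = h * ∑ i, f u i * u i := by
    rw [Finset.mul_sum]
    refine Finset.sum_congr rfl fun i _ => ?_
    have hi : u i = v i + h * f u i := congrFun huv i
    rw [hi]; ring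
  have := sum_sq_le_sum_sq_add_two_mul_sum_sub_mul u v
  nlinarith [mul_le_mul_of_nonneg_left hcoer hh, mul_nonneg hh hG]

theorem le_pow_mul_add_of_le_mul_add {a : ℕ → ℝ} {ρ b : ℝ} {n : ℕ} (hρ : 1 ≤ ρ) (hb : 0 ≤ b)
    (hstep : ∀ j < n, a (j + 1) ≤ ρ * (a j + b)) : a n ≤ ρ ^ n * (a 0 + n * b) := by
  induction n with
  | zero => simp
  | succ n ih =>
    have ih := ih fun j hj => hstep j (Nat.lt_succ_of_lt hj)
    have hρn : ρ * b ≤ ρ ^ (n + 1) * b :=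
      mul_le_mul_of_nonneg_right (le_self_pow₀ hρ n.succ_ne_zero) hb
    calc a (n + 1) ≤ ρ * (a n + b) := hstep n n.lt_succ_self
      _ ≤ ρ * (ρ ^ n * (a 0 + n * b) + b) := by gcongr
      _ = ρ ^ (n + 1) * (a 0 + n * b) + ρ * b := by ring
      _ ≤ ρ ^ (n + 1) * (a 0 + n * b) + ρ ^ (n + 1) * b := by linarith
      _ = ρ ^ (n + 1) * (a 0 + (n + 1 : ℕ) * b) := by push_cast; ring

theorem inv_one_sub_pow_le_exp {x : ℝ} (hx : x < 1) (n : ℕ) :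
    (1 - x)⁻¹ ^ n ≤ Real.exp (n * x / (1 - x)) := by
  have hpos : 0 < 1 - x := by linarith
  have hbase : (1 - x)⁻¹ ≤ Real.exp (x / (1 - x)) := by
    have : (1 - x)⁻¹ = x / (1 - x) + 1 := by field_simp; ring
    rw [this]; exact Real.add_one_le_exp _
  calc (1 - x)⁻¹ ^ n ≤ Real.exp (x / (1 - x)) ^ n := by gcongr
    _ = Real.exp (n * x / (1 - x)) := by rw [← Real.exp_nat_mul, mul_div_assoc]

end Elementary

section Independence

variable {Ω : Type*} {mΩ : MeasurableSpace Ω} {μ : Measure Ω}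

theorem ProbabilityTheory.Indep.indepFun_of_measurable {β γ : Type*} [MeasurableSpace β]
    [MeasurableSpace γ] {M₁ M₂ : MeasurableSpace Ω} (h : Indep M₁ M₂ μ) {φ : Ω → β} {ψ : Ω → γ}
    (hφ : Measurable[M₁] φ) (hψ : Measurable[M₂] ψ) : IndepFun φ ψ μ :=
  (IndepFun_iff_Indep _ _ _).2 <|
    indep_of_indep_of_le_right (indep_of_indep_of_le_left h hφ.comap_le) hψ.comap_le

theorem memLp_two_of_integrable_sum_sq {ι : Type*} [Fintype ι] {u : Ω → ι → ℝ}
    (hu : ∀ i, AEStronglyMeasurable (fun ω => u ω i) μ)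
    (hu2 : Integrable (fun ω => ∑ i, u ω i ^ 2) μ) (i : ι) : MemLp (fun ω => u ω i) 2 μ := by
  refine (memLp_two_iff_integrable_sq (hu i)).2 <|
    hu2.mono' ((hu i).pow 2) (ae_of_all _ fun ω => ?_)
  rw [Real.norm_eq_abs, abs_of_nonneg (sq_nonneg _)]
  exact Finset.single_le_sum (f := fun i => u ω i ^ 2) (fun _ _ => sq_nonneg _)
    (Finset.mem_univ i)

variable [IsProbabilityMeasure μ] {κ : Type*} [Fintype κ]

theorem integrable_and_integral_add_sum_mul_sq_of_indep {M : MeasurableSpace Ω} {W : Ω → κ → ℝ}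
    {h : ℝ} (hind : Indep (MeasurableSpace.comap W inferInstance) M μ)
    (hW : ∀ k, MemLp (fun ω => W ω k) 2 μ) (hWmean : ∀ k, ∫ ω, W ω k ∂μ = 0)
    (hWvar : ∀ k, ∫ ω, W ω k ^ 2 ∂μ = h)
    (hWuncorr : ∀ k l, k ≠ l → ∫ ω, W ω k * W ω l ∂μ = 0)
    {a : Ω → ℝ} {c : Ω → κ → ℝ} (ha : Measurable[M] a) (hc : ∀ k, Measurable[M] fun ω => c ω k)
    (ha2 : MemLp a 2 μ) (hc2 : ∀ k, MemLp (fun ω => c ω k) 2 μ) :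
    Integrable (fun ω => (a ω + ∑ k, c ω k * W ω k) ^ 2) μ ∧
      ∫ ω, (a ω + ∑ k, c ω k * W ω k) ^ 2 ∂μ
        = ∫ ω, a ω ^ 2 ∂μ + h * ∑ k, ∫ ω, c ω k ^ 2 ∂μ := by
  have hWM : ∀ k, Measurable[MeasurableSpace.comap W inferInstance] fun ω => W ω k :=
    fun k => (measurable_pi_apply k).comp (comap_measurable W)
  have hindep_cross : ∀ k, IndepFun (fun ω => a ω * c ω k) (fun ω => W ω k) μ :=
    fun k => (hind.indepFun_of_measurable (hWM k) (ha.mul (hc k))).symm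
  have hindep_quad : ∀ k l,
      IndepFun (fun ω => c ω k * c ω l) (fun ω => W ω k * W ω l) μ :=
    fun k l => (hind.indepFun_of_measurable ((hWM k).mul (hWM l)) ((hc k).mul (hc l))).symm
  have hcross_int : ∀ k, Integrable (fun ω => a ω * c ω k * W ω k) μ :=
    fun k => (hindep_cross k).integrable_mul (ha2.integrable_mul (hc2 k))
      ((hW k).integrable one_le_two)
  have hquad_int : ∀ k l, Integrable (fun ω => c ω k * c ω l * (W ω k * W ω l)) μ :=
    fun k l => (hindep_quad k l).integrable_mul ((hc2 k).integrable_mul (hc2 l))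
      ((hW k).integrable_mul (hW l))
  have hcross : ∀ k, ∫ ω, a ω * c ω k * W ω k ∂μ = 0 := fun k => by
    rw [(hindep_cross k).integral_fun_mul_eq_mul_integral
      (ha2.integrable_mul (hc2 k)).aestronglyMeasurable (hW k).aestronglyMeasurable]
    simp [hWmean k]
  have hquad : ∀ k l, ∫ ω, c ω k * c ω l * (W ω k * W ω l) ∂μ
      = (∫ ω, c ω k * c ω l ∂μ) * ∫ ω, W ω k * W ω l ∂μ := fun k l =>
    (hindep_quad k l).integral_fun_mul_eq_mul_integral
      ((hc2 k).integrable_mul (hc2 l)).aestronglyMeasurable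
      ((hW k).integrable_mul (hW l)).aestronglyMeasurable
  have hquad_row : ∀ k, ∑ l, ∫ ω, c ω k * c ω l * (W ω k * W ω l) ∂μ
      = h * ∫ ω, c ω k ^ 2 ∂μ := fun k => by
    rw [Finset.sum_eq_single k (fun l _ hlk => by rw [hquad, hWuncorr k l hlk.symm, mul_zero])
      (fun hk => absurd (Finset.mem_univ k) hk), hquad]
    simp only [← sq, hWvar, mul_comm]
  have hsum_cross : Integrable (fun ω => 2 * ∑ k, a ω * c ω k * W ω k) μ :=
    (integrable_finsetSum _ fun k _ => hcross_int k).const_mul 2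
  have hsum_quad : Integrable (fun ω => ∑ k, ∑ l, c ω k * c ω l * (W ω k * W ω l)) μ :=
    integrable_finsetSum _ fun k _ => integrable_finsetSum _ fun l _ => hquad_int k l
  have hsq_cross : Integrable (fun ω => a ω ^ 2 + 2 * ∑ k, a ω * c ω k * W ω k) μ :=
    ha2.integrable_sq.add hsum_cross
  simp_rw [add_sum_mul_sq]
  refine ⟨hsq_cross.add hsum_quad, ?_⟩
  rw [integral_add hsq_cross hsum_quad, integral_add ha2.integrable_sq hsum_cross,
    integral_const_mul, integral_finsetSum _ fun k _ => hcross_int k,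
    integral_finsetSum _ fun k _ => integrable_finsetSum _ fun l _ => hquad_int k l]
  simp_rw [integral_finsetSum _ fun l _ => hquad_int _ l, hquad_row, hcross, Finset.mul_sum]
  simp

end Independence

section Scheme

variable {Ω : Type*} {mΩ : MeasurableSpace Ω} {μ : Measure Ω} {ι κ : Type*} [Fintype ι]
  [Fintype κ]

noncomputable def schemeEnergy (μ : Measure Ω) (g : (ι → ℝ) → Matrix ι κ ℝ) (h : ℝ)
    (u : Ω → ι → ℝ) : ℝ :=
  ∫ ω, ∑ i, u ω i ^ 2 ∂μ + h * ∫ ω, ∑ i, ∑ k, g (u ω) i k ^ 2 ∂μ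

theorem schemeEnergy_nonneg (g : (ι → ℝ) → Matrix ι κ ℝ) {h : ℝ} (hh : 0 ≤ h) (u : Ω → ι → ℝ) :
    0 ≤ schemeEnergy μ g h u :=
  add_nonneg (integral_nonneg fun _ => by positivity)
    (mul_nonneg hh (integral_nonneg fun _ => by positivity))

variable [IsProbabilityMeasure μ]

theorem integrable_and_integral_sum_sq_add_mulVec_of_indep {M : MeasurableSpace Ω}
    {W : Ω → κ → ℝ} {h : ℝ} (hind : Indep (MeasurableSpace.comap W inferInstance) M μ)
    (hW : ∀ k, MemLp (fun ω => W ω k) 2 μ) (hWmean : ∀ k, ∫ ω, W ω k ∂μ = 0)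
    (hWvar : ∀ k, ∫ ω, W ω k ^ 2 ∂μ = h)
    (hWuncorr : ∀ k l, k ≠ l → ∫ ω, W ω k * W ω l ∂μ = 0)
    {X : Ω → ι → ℝ} {G : Ω → Matrix ι κ ℝ} (hX : ∀ i, Measurable[M] fun ω => X ω i)
    (hG : ∀ i k, Measurable[M] fun ω => G ω i k) (hX2 : ∀ i, MemLp (fun ω => X ω i) 2 μ)
    (hG2 : ∀ i k, MemLp (fun ω => G ω i k) 2 μ) :
    Integrable (fun ω => ∑ i, (X ω + G ω *ᵥ W ω) i ^ 2) μ ∧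
      ∫ ω, ∑ i, (X ω + G ω *ᵥ W ω) i ^ 2 ∂μ
        = ∫ ω, ∑ i, X ω i ^ 2 ∂μ + h * ∫ ω, ∑ i, ∑ k, G ω i k ^ 2 ∂μ := by
  have hrow := fun i => integrable_and_integral_add_sum_mul_sq_of_indep hind hW hWmean hWvar
    hWuncorr (hX i) (hG i) (hX2 i) (hG2 i)
  simp only [Pi.add_apply, mulVec, dotProduct]
  refine ⟨integrable_finsetSum _ fun i _ => (hrow i).1, ?_⟩
  rw [integral_finsetSum _ fun i _ => (hrow i).1,
    integral_finsetSum _ fun i _ => (hX2 i).integrable_sq,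
    integral_finsetSum _ fun i _ => integrable_finsetSum _ fun k _ => (hG2 i k).integrable_sq]
  simp_rw [(hrow _).2, integral_finsetSum _ fun k _ => (hG2 _ k).integrable_sq,
    Finset.sum_add_distrib, Finset.mul_sum]

theorem schemeEnergy_step {f : (ι → ℝ) → ι → ℝ} {g : (ι → ℝ) → Matrix ι κ ℝ} {L q h : ℝ}
    (hL : 0 ≤ L) (hq : 1 ≤ q) (hh : 0 ≤ h) (hg : ∀ i k, Continuous fun x => g x i k)
    (hcoer : ∀ x, ∑ i, f x i * x i + (4 * q - 3) / 2 * ∑ i, ∑ k, g x i k ^ 2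
      ≤ L * (1 + ∑ i, x i ^ 2))
    {M : MeasurableSpace Ω} (hM : M ≤ mΩ) {W : Ω → κ → ℝ}
    (hind : Indep (MeasurableSpace.comap W inferInstance) M μ)
    (hW : ∀ k, MemLp (fun ω => W ω k) 2 μ) (hWmean : ∀ k, ∫ ω, W ω k ∂μ = 0)
    (hWvar : ∀ k, ∫ ω, W ω k ^ 2 ∂μ = h)
    (hWuncorr : ∀ k l, k ≠ l → ∫ ω, W ω k * W ω l ∂μ = 0)
    {u₀ u₁ : Ω → ι → ℝ} (hu₀ : ∀ i, Measurable[M] fun ω => u₀ ω i)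
    (hu₀2 : Integrable (fun ω => ∑ i, u₀ ω i ^ 2) μ)
    (hgu₀2 : Integrable (fun ω => ∑ i, ∑ k, g (u₀ ω) i k ^ 2) μ)
    (hu₁2 : Integrable (fun ω => ∑ i, u₁ ω i ^ 2) μ)
    (hgu₁2 : Integrable (fun ω => ∑ i, ∑ k, g (u₁ ω) i k ^ 2) μ)
    (hrec : ∀ ω, u₁ ω = u₀ ω + h • f (u₁ ω) + g (u₀ ω) *ᵥ W ω) :
    (1 - 2 * L * h) * schemeEnergy μ g h u₁ ≤ schemeEnergy μ g h u₀ + 2 * L * h := by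
  have hgu₀ : ∀ i k, Measurable[M] fun ω => g (u₀ ω) i k :=
    fun i k => (hg i k).measurable.comp (measurable_pi_lambda _ hu₀)
  have hX2 := memLp_two_of_integrable_sum_sq
    (fun i => ((hu₀ i).mono hM le_rfl).aestronglyMeasurable) hu₀2
  have hG2 : ∀ i k, MemLp (fun ω => g (u₀ ω) i k) 2 μ := fun i k =>
    memLp_two_of_integrable_sum_sq (u := fun ω (p : ι × κ) => g (u₀ ω) p.1 p.2)
      (fun p => ((hgu₀ p.1 p.2).mono hM le_rfl).aestronglyMeasurable)
      (by simpa only [Fintype.sum_prod_type] using hgu₀2) (i, k)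
  obtain ⟨hV2, hV⟩ := integrable_and_integral_sum_sq_add_mulVec_of_indep hind hW hWmean hWvar
    hWuncorr hu₀ hgu₀ hX2 hG2
  have hpt : ∀ ω, ∑ i, u₁ ω i ^ 2 + h * ∑ i, ∑ k, g (u₁ ω) i k ^ 2
      ≤ ∑ i, (u₀ ω + g (u₀ ω) *ᵥ W ω) i ^ 2 + 2 * L * h * (1 + ∑ i, u₁ ω i ^ 2) :=
    fun ω => sum_sq_add_mul_le_of_coercive hq hh (by positivity) (hcoer _)
      ((hrec ω).trans (add_right_comm _ _ _))
  have hlhs : Integrable (fun ω => ∑ i, u₁ ω i ^ 2 + h * ∑ i, ∑ k, g (u₁ ω) i k ^ 2) μ :=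
    hu₁2.add (hgu₁2.const_mul h)
  have h1u₁ : Integrable (fun ω => 1 + ∑ i, u₁ ω i ^ 2) μ := (integrable_const 1).add hu₁2
  have hrhs : Integrable (fun ω => ∑ i, (u₀ ω + g (u₀ ω) *ᵥ W ω) i ^ 2
      + 2 * L * h * (1 + ∑ i, u₁ ω i ^ 2)) μ := hV2.add (h1u₁.const_mul _)
  have hint := integral_mono hlhs hrhs hpt
  rw [integral_add hu₁2 (hgu₁2.const_mul h), integral_add hV2 (h1u₁.const_mul _),
    integral_const_mul, integral_const_mul, integral_add (integrable_const 1) hu₁2, hV] at hint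
  have hG₁ : 0 ≤ h * ∫ ω, ∑ i, ∑ k, g (u₁ ω) i k ^ 2 ∂μ :=
    mul_nonneg hh (integral_nonneg fun _ => by positivity)
  simp only [schemeEnergy, integral_const, probReal_univ, smul_eq_mul, mul_one] at hint ⊢
  nlinarith [mul_nonneg (by positivity : 0 ≤ 2 * L * h) hG₁]

end Scheme

theorem backward_euler_maruyama_apriori_general
    (m d : ℕ)
    {Ω : Type*} [MeasurableSpace Ω] (μ : Measure Ω) [IsProbabilityMeasure μ]
    (F : ℕ → MeasurableSpace Ω) (hF : ∀ j, F j ≤ ‹MeasurableSpace Ω›)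
    (L q T h : ℝ) (hL : 0 < L) (hq : 1 ≤ q)
    (hh0 : 0 < h) (hh1 : h < 1 / (2 * L))
    (N : ℕ) (hT : (N : ℝ) * h ≤ T)
    (f : (Fin m → ℝ) → (Fin m → ℝ))
    (g : (Fin m → ℝ) → Matrix (Fin m) (Fin d) ℝ)
    (hfg : Continuous f ∧ ∀ i j, Continuous fun x => g x i j)
    (hcoer : ∀ x : Fin m → ℝ,
      (∑ i, f x i * x i) + ((4 * q - 3) / 2) * (∑ i, ∑ k, (g x i k) ^ 2)
        ≤ L * (1 + ∑ i, (x i) ^ 2))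
    (ΔW : ℕ → Ω → (Fin d → ℝ))
    (hΔWmeas : ∀ j, Measurable (ΔW j))
    (hΔWindep : ∀ j, 1 ≤ j → j ≤ N →
      Indep (MeasurableSpace.comap (ΔW j) inferInstance) (F (j - 1)) μ)
    (hΔWmean : ∀ j, 1 ≤ j → j ≤ N → ∀ i, ∫ ω, ΔW j ω i ∂μ = 0)
    (hΔWvar : ∀ j, 1 ≤ j → j ≤ N → ∀ i, ∫ ω, (ΔW j ω i) ^ 2 ∂μ = h)
    (hΔWuncorr : ∀ j, 1 ≤ j → j ≤ N → ∀ i k, i ≠ k → ∫ ω, ΔW j ω i * ΔW j ω k ∂μ = 0)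
    (U : ℕ → Ω → (Fin m → ℝ))
    (hUadapted : ∀ j, j ≤ N → ∀ i, Measurable[F j] fun ω => U j ω i)
    (hUL2 : ∀ j, j ≤ N → Integrable (fun ω => ∑ i, (U j ω i) ^ 2) μ)
    (hgUL2 : ∀ j, j ≤ N → Integrable (fun ω => ∑ i, ∑ k, (g (U j ω) i k) ^ 2) μ)
    (hrec : ∀ j, 1 ≤ j → j ≤ N → ∀ ω,
      U j ω = U (j - 1) ω + h • f (U j ω) + (g (U (j - 1) ω)) *ᵥ ΔW j ω) :
    ∀ n, 1 ≤ n → n ≤ N →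
      (∫ ω, ∑ i, (U n ω i) ^ 2 ∂μ) + h * ∫ ω, ∑ i, ∑ k, (g (U n ω) i k) ^ 2 ∂μ
        ≤ (max 1 (2 * L * T) / (1 - 2 * L * h))
            * Real.exp (2 * L * (n * h) / (1 - 2 * L * h))
            * (1 + (∫ ω, ∑ i, (U 0 ω i) ^ 2 ∂μ)
                + h * ∫ ω, ∑ i, ∑ k, (g (U 0 ω) i k) ^ 2 ∂μ) := by
  intro n _ hnN
  have hLh : 2 * L * h < 1 := by rwa [lt_div_iff₀ (by positivity), mul_comm] at hh1
  have hρ : 1 ≤ (1 - 2 * L * h)⁻¹ := one_le_inv₀ (by linarith) |>.2 (by nlinarith)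
  have hΔW2 : ∀ j, 1 ≤ j → j ≤ N → ∀ k, MemLp (fun ω => ΔW j ω k) 2 μ := fun j hj1 hjN k =>
    (memLp_two_iff_integrable_sq (hΔWmeas j).eval.aestronglyMeasurable).2 <|
      .of_integral_ne_zero <| by rw [hΔWvar j hj1 hjN k]; exact hh0.ne'
  have hstep : ∀ j < n, schemeEnergy μ g h (U (j + 1))
      ≤ (1 - 2 * L * h)⁻¹ * (schemeEnergy μ g h (U j) + 2 * L * h) := fun j hj => by
    have hj : 1 ≤ j + 1 ∧ j + 1 ≤ N := ⟨by omega, by omega⟩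
    rw [le_inv_mul_iff₀ (by linarith)]
    exact schemeEnergy_step hL.le hq hh0.le hfg.2 hcoer (hF j) (hΔWindep _ hj.1 hj.2)
      (hΔW2 _ hj.1 hj.2) (hΔWmean _ hj.1 hj.2) (hΔWvar _ hj.1 hj.2) (hΔWuncorr _ hj.1 hj.2)
      (hUadapted j (by omega)) (hUL2 j (by omega)) (hgUL2 j (by omega)) (hUL2 _ hj.2)
      (hgUL2 _ hj.2) (hrec _ hj.1 hj.2)
  have hgronwall := le_pow_mul_add_of_le_mul_add (a := fun j => schemeEnergy μ g h (U j)) hρ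
    (by positivity) hstep
  have hexp : (1 - 2 * L * h)⁻¹ ^ n ≤ Real.exp (2 * L * (n * h) / (1 - 2 * L * h)) := by
    convert inv_one_sub_pow_le_exp hLh n using 2; ring
  have hnT : n * (2 * L * h) ≤ max 1 (2 * L * T) := by
    have : (n : ℝ) * h ≤ T := le_trans (by gcongr) hT
    nlinarith [le_max_right 1 (2 * L * T)]
  have hE0 := schemeEnergy_nonneg (μ := μ) g hh0.le (U 0)
  calc schemeEnergy μ g h (U n)
      ≤ (1 - 2 * L * h)⁻¹ ^ n * (schemeEnergy μ g h (U 0) + n * (2 * L * h)) := hgronwall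
    _ ≤ Real.exp (2 * L * (n * h) / (1 - 2 * L * h))
          * (max 1 (2 * L * T) * (1 + schemeEnergy μ g h (U 0))) := by
      gcongr ?_ * ?_
      nlinarith [le_max_left 1 (2 * L * T)]
    _ ≤ _ := (le_mul_of_one_le_left (by positivity) hρ).trans_eq (by unfold schemeEnergy; ring)

/-- A priori estimate for the backward Euler–Maruyama scheme under the
coercivity condition `(f(x),x) + ((4q-3)/2)|g(x)|²_HS ≤ L(1+|x|²)`. -/
theorem backward_euler_maruyama_apriori
    (m d : ℕ) (hm : 0 < m) (hd : 0 < d)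
    {Ω : Type*} [MeasurableSpace Ω] (μ : Measure Ω) [IsProbabilityMeasure μ]
    (F : ℕ → MeasurableSpace Ω) (hF : ∀ j, F j ≤ ‹MeasurableSpace Ω›)
    (hFmono : Monotone F)
    (L q T h : ℝ) (hL : 0 < L) (hq : 1 ≤ q)
    (hh0 : 0 < h) (hh1 : h < 1 / (2 * L))
    (N : ℕ) (hT : (N : ℝ) * h ≤ T)
    (f : (Fin m → ℝ) → (Fin m → ℝ))
    (g : (Fin m → ℝ) → Matrix (Fin m) (Fin d) ℝ)
    (hfg : Continuous f ∧ ∀ i j, Continuous fun x => g x i j)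
    (hcoer : ∀ x : Fin m → ℝ,
      (∑ i, f x i * x i) + ((4 * q - 3) / 2) * (∑ i, ∑ k, (g x i k) ^ 2)
        ≤ L * (1 + ∑ i, (x i) ^ 2))
    (ΔW : ℕ → Ω → (Fin d → ℝ))
    (hΔWmeas : ∀ j, Measurable (ΔW j))
    (hΔWindep : ∀ j, 1 ≤ j → j ≤ N →
      Indep (MeasurableSpace.comap (ΔW j) inferInstance) (F (j - 1)) μ)
    (hΔWmean : ∀ j, 1 ≤ j → j ≤ N → ∀ i, ∫ ω, ΔW j ω i ∂μ = 0)
    (hΔWvar : ∀ j, 1 ≤ j → j ≤ N → ∀ i, ∫ ω, (ΔW j ω i) ^ 2 ∂μ = h)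
    (hΔWuncorr : ∀ j, 1 ≤ j → j ≤ N → ∀ i k, i ≠ k → ∫ ω, ΔW j ω i * ΔW j ω k ∂μ = 0)
    (U : ℕ → Ω → (Fin m → ℝ))
    (hUadapted : ∀ j, j ≤ N → ∀ i, Measurable[F j] fun ω => U j ω i)
    (hUL2 : ∀ j, j ≤ N → Integrable (fun ω => ∑ i, (U j ω i) ^ 2) μ)
    (hfUL2 : ∀ j, j ≤ N → Integrable (fun ω => ∑ i, (f (U j ω) i) ^ 2) μ)
    (hgUL2 : ∀ j, j ≤ N → Integrable (fun ω => ∑ i, ∑ k, (g (U j ω) i k) ^ 2) μ)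
    (hrec : ∀ j, 1 ≤ j → j ≤ N → ∀ ω,
      U j ω = U (j - 1) ω + h • f (U j ω) + (g (U (j - 1) ω)) *ᵥ ΔW j ω) :
    ∀ n, 1 ≤ n → n ≤ N →
      (∫ ω, ∑ i, (U n ω i) ^ 2 ∂μ) + h * ∫ ω, ∑ i, ∑ k, (g (U n ω) i k) ^ 2 ∂μ
        ≤ (max 1 (2 * L * T) / (1 - 2 * L * h))
            * Real.exp (2 * L * (n * h) / (1 - 2 * L * h))
            * (1 + (∫ ω, ∑ i, (U 0 ω i) ^ 2 ∂μ)
                + h * ∫ ω, ∑ i, ∑ k, (g (U 0 ω) i k) ^ 2 ∂μ) :=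
  backward_euler_maruyama_apriori_general m d μ F hF L q T h hL hq hh0 hh1 N hT f g hfg hcoer ΔW
    hΔWmeas hΔWindep hΔWmean hΔWvar hΔWuncorr U hUadapted hUL2 hgUL2 hrec
end
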